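/- arXiv:1607.00131 — 7 statements merged into one kernel-verified Lean document; each statement's English description precedes it below -/
import Mathlib

section
/- Let F(r,n) = (r/24)(r^2-3r+2)(2n-3-r) and Z_2(n) = (n mod 2)·F(⌊n/2⌋+1, n) + (2 - (n mod 2))·F(⌊n/2⌋, n). Then for every integer n ≥ 3, Z_2(n) = (1/4)·⌊n/2⌋·⌊(n-1)/2⌋·⌊(n-2)/2⌋·⌊(n-3)/2⌋. -/
/-- F(r,n) = (r/24)(r²-3r+2)(2n-3-r), rational-valued. -/
def Fq (r n : ℤ) : ℚ := (r : ℚ) / 24 * ((r : ℚ)^2 - 3*r + 2) * (2*n - 3 - r)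

/-- Z_k(n) = (n mod k)·F(⌊n/k⌋+1,n) + (k - n mod k)·F(⌊n/k⌋,n). -/
def Zq (k n : ℤ) : ℚ := ((n % k : ℤ) : ℚ) * Fq (n / k + 1) n + ((k - n % k : ℤ) : ℚ) * Fq (n / k) n

theorem stmt2 (n : ℤ) (hn : 3 ≤ n) :
    Zq 2 n = 1/4 * ((n / 2 : ℤ) : ℚ) * (((n - 1) / 2 : ℤ) : ℚ)
      * (((n - 2) / 2 : ℤ) : ℚ) * (((n - 3) / 2 : ℤ) : ℚ) := by
  rcases Int.even_or_odd n with ⟨m, rfl⟩ | ⟨m, rfl⟩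
  · have h1 : m + m = 2 * m := by ring
    rw [h1]
    have e0 : (2 * m) % 2 = 0 := by omega
    have e1 : (2 * m) / 2 = m := by omega
    have e2 : (2 * m - 1) / 2 = m - 1 := by omega
    have e3 : (2 * m - 2) / 2 = m - 1 := by omega
    have e4 : (2 * m - 3) / 2 = m - 2 := by omega
    simp only [Zq, Fq]
    rw [e0, e1, e2, e3, e4]
    push_cast
    ring
  · have h1 : 2 * m + 1 = 2 * m + 1 := rfl
    have e0 : (2 * m + 1) % 2 = 1 := by omega
    have e1 : (2 * m + 1) / 2 = m := by omega
    have e2 : (2 * m + 1 - 1) / 2 = m := by omega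
    have e3 : (2 * m + 1 - 2) / 2 = m - 1 := by omega
    have e4 : (2 * m + 1 - 3) / 2 = m - 1 := by omega
    simp only [Zq, Fq]
    rw [e0, e1, e2, e3, e4]
    push_cast
    ring
end

section
/- Let D be a fixed drawing of a finite graph in the plane, let (e_ℓ)_{ℓ≥0} be a sequence of natural numbers, and suppose that for every subgraph H of D and every ℓ, if e(H) > e_ℓ then H has an edge with at least ℓ+1 crossings in H. Then for every subgraph H of D and every natural number m, cr(H) ≥ m·e(H) − ∑_{ℓ=0}^{m-1} e_ℓ. -/
lemma crossing_erase_aux {α : Type*} [LinearOrder α]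
    (R : α → α → Prop) [DecidableRel R] (hsymm : Symmetric R) (hirr : Irreflexive R)
    (H : Finset α) (x : α) (hx : x ∈ H) :
    (((H.erase x) ×ˢ (H.erase x)).filter (fun p => p.1 < p.2 ∧ R p.1 p.2)).card
      + (H.filter (fun y => R x y)).card
      ≤ ((H ×ˢ H).filter (fun p => p.1 < p.2 ∧ R p.1 p.2)).card := by
  classical
  set A := (H ×ˢ H).filter (fun p => p.1 < p.2 ∧ R p.1 p.2) with hA
  set B := ((H.erase x) ×ˢ (H.erase x)).filter (fun p => p.1 < p.2 ∧ R p.1 p.2) with hB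
  set C := (H.filter (fun y => R x y)).image
    (fun y => if x < y then (x, y) else (y, x)) with hC
  have hCcard : C.card = (H.filter (fun y => R x y)).card := by
    apply Finset.card_image_of_injOn
    intro y hy z hz hyz
    simp only [Finset.mem_coe, Finset.mem_filter] at hy hz
    have hyx : y ≠ x := fun h => hirr x (h ▸ hy.2)
    have hzx : z ≠ x := fun h => hirr x (h ▸ hz.2)
    by_cases h1 : x < y <;> by_cases h2 : x < z <;>
      simp [h1, h2, Prod.ext_iff] at hyz <;> tauto
  have hBC : Disjoint B C := by
    rw [Finset.disjoint_left]
    intro p hp hpc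
    simp only [hB, Finset.mem_filter, Finset.mem_product, Finset.mem_erase] at hp
    simp only [hC, Finset.mem_image, Finset.mem_filter] at hpc
    obtain ⟨y, hy, hpy⟩ := hpc
    by_cases h : x < y <;> simp [h] at hpy <;>
      · subst hpy; simp_all
  have hsub : B ∪ C ⊆ A := by
    intro p hp
    rcases Finset.mem_union.mp hp with hp | hp
    · simp only [hB, Finset.mem_filter, Finset.mem_product, Finset.mem_erase] at hp
      simp only [hA, Finset.mem_filter, Finset.mem_product]
      exact ⟨⟨hp.1.1.2, hp.1.2.2⟩, hp.2⟩
    · simp only [hC, Finset.mem_image, Finset.mem_filter] at hp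
      obtain ⟨y, ⟨hyH, hRy⟩, hpy⟩ := hp
      have hyx : y ≠ x := fun h => hirr x (h ▸ hRy)
      by_cases h : x < y
      · simp only [h, if_true] at hpy
        subst hpy
        simp only [hA, Finset.mem_filter, Finset.mem_product]
        exact ⟨⟨hx, hyH⟩, h, hRy⟩
      · simp only [h, if_false] at hpy
        subst hpy
        have hlt : y < x := lt_of_le_of_ne (not_lt.mp h) hyx
        simp only [hA, Finset.mem_filter, Finset.mem_product]
        exact ⟨⟨hyH, hx⟩, hlt, hsymm hRy⟩
  calc B.card + (H.filter (fun y => R x y)).card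
      = B.card + C.card := by rw [hCcard]
    _ = (B ∪ C).card := (Finset.card_union_of_disjoint hBC).symm
    _ ≤ A.card := Finset.card_le_card hsub

theorem stmt4 {α : Type*} [LinearOrder α] (D : Finset α)
    (R : α → α → Prop) [DecidableRel R] (hsymm : Symmetric R) (hirr : Irreflexive R)
    (eb : ℕ → ℕ)
    (hb : ∀ H ⊆ D, ∀ ℓ : ℕ, eb ℓ < H.card →
      ∃ x ∈ H, ℓ + 1 ≤ (H.filter (fun y => R x y)).card) :
    ∀ H ⊆ D, ∀ m : ℕ,
      (m : ℤ) * H.card - ∑ ℓ ∈ Finset.range m, (eb ℓ : ℤ) ≤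
        (((H ×ˢ H).filter (fun p => p.1 < p.2 ∧ R p.1 p.2)).card : ℤ) := by
  classical
  suffices h : ∀ m : ℕ, ∀ H ⊆ D,
      (m : ℤ) * H.card - ∑ ℓ ∈ Finset.range m, (eb ℓ : ℤ) ≤
        (((H ×ˢ H).filter (fun p => p.1 < p.2 ∧ R p.1 p.2)).card : ℤ) by
    intro H hH m; exact h m H hH
  intro m
  induction m with
  | zero => intro H _; simp
  | succ m ih =>
    intro H
    induction H using Finset.strongInduction with
    | _ H ih2 =>
      intro hH
      by_cases hc : H.card ≤ eb m
      · have h1 := ih H hH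
        have h2 : (H.card : ℤ) ≤ (eb m : ℤ) := by exact_mod_cast hc
        rw [Finset.sum_range_succ]
        push_cast
        linarith
      · obtain ⟨x, hx, hdeg⟩ := hb H hH m (lt_of_not_ge hc)
        have hssub : H.erase x ⊂ H := Finset.erase_ssubset hx
        have h1 := ih2 (H.erase x) hssub ((Finset.erase_subset _ _).trans hH)
        have h2 := crossing_erase_aux R hsymm hirr H x hx
        have h3 : (H.erase x).card + 1 = H.card := Finset.card_erase_add_one hx
        have h4 : m + 1 ≤ (H.filter (fun y => R x y)).card := hdeg
        rw [Finset.sum_range_succ] at h1 ⊢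
        have h1' : ((m:ℤ)+1) * ((H.erase x).card : ℤ) - (∑ ℓ ∈ Finset.range m, (eb ℓ : ℤ)) - (eb m : ℤ) ≤
            ((((H.erase x) ×ˢ (H.erase x)).filter (fun p => p.1 < p.2 ∧ R p.1 p.2)).card : ℤ) := by
          push_cast at h1 ⊢; linarith
        have h2' : ((((H.erase x) ×ˢ (H.erase x)).filter (fun p => p.1 < p.2 ∧ R p.1 p.2)).card : ℤ)
            + ((H.filter (fun y => R x y)).card : ℤ)
            ≤ (((H ×ˢ H).filter (fun p => p.1 < p.2 ∧ R p.1 p.2)).card : ℤ) := by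
          exact_mod_cast h2
        have h3' : ((H.erase x).card : ℤ) + 1 = (H.card : ℤ) := by exact_mod_cast h3
        have h4' : (m : ℤ) + 1 ≤ ((H.filter (fun y => R x y)).card : ℤ) := by exact_mod_cast h4
        push_cast
        nlinarith [h1', h2', h3', h4']
end

section
/- Let E be a finite set equipped with a symmetric irreflexive 'crossing' relation. For a subset H ⊆ E let cr(H) be the number of unordered crossing pairs within H, and for ℓ ≥ 0 let e_ℓ = max{|H| : every element of H crosses at most ℓ elements of H}. If E is partitioned into k color classes H_1,…,H_k, then the total number of monochromatic crossings ∑_i cr(H_i) is at least m·|E| − k·∑_{ℓ=0}^{m-1} e_ℓ, for every natural number m. -/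
/-!
Fix a colour class `G ⊆ E`. Repeatedly deleting an element of local crossing degree greater than
`ℓ` destroys at least `ℓ + 1` crossings each time and stops at a subset `G'` whose local crossing
degrees are at most `ℓ`, so `|G'| ≤ e_ℓ` and `cr(G) ≥ cr(G') + (ℓ + 1)(|G| - |G'|)`. Combining
this for `ℓ = m` with the bound for `G'` at level `m` gives, by induction on `m`,
`cr(G) ≥ m|G| - ∑_{ℓ<m} e_ℓ`; summing over the `k` classes gives the theorem.
-/

open Finset

section Crossing

variable {α : Type*} (R : α → α → Prop) [DecidableRel R]

def localCrossingDegree (G : Finset α) (x : α) : ℕ := #(G.filter fun y => R x y)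

def crossingNumber [LinearOrder α] (G : Finset α) : ℕ :=
  #((G ×ˢ G).filter fun p => p.1 < p.2 ∧ R p.1 p.2)

noncomputable def maxCardLocalCrossingLE (E : Finset α) (ℓ : ℕ) : ℕ :=
  sSup {s : ℕ | ∃ G ⊆ E, (∀ x ∈ G, localCrossingDegree R G x ≤ ℓ) ∧ #G = s}

variable {R}

theorem card_le_maxCardLocalCrossingLE {E G : Finset α} {ℓ : ℕ} (hGE : G ⊆ E)
    (hG : ∀ x ∈ G, localCrossingDegree R G x ≤ ℓ) : #G ≤ maxCardLocalCrossingLE R E ℓ :=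
  le_csSup ⟨#E, fun _ ⟨_, hG'E, _, hs⟩ => hs ▸ card_le_card hG'E⟩ ⟨G, hGE, hG, rfl⟩

theorem crossingNumber_erase_add [LinearOrder α] [Std.Symm R] [Std.Irrefl R]
    {G : Finset α} {x : α} (hx : x ∈ G) :
    crossingNumber R (G.erase x) + localCrossingDegree R G x = crossingNumber R G := by
  unfold crossingNumber localCrossingDegree
  have hsub : ((G.erase x ×ˢ G.erase x).filter fun p => p.1 < p.2 ∧ R p.1 p.2) ⊆
      (G ×ˢ G).filter fun p => p.1 < p.2 ∧ R p.1 p.2 :=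
    filter_subset_filter _ (product_subset_product (erase_subset x G) (erase_subset x G))
  have hdiff : ((G ×ˢ G).filter fun p => p.1 < p.2 ∧ R p.1 p.2) \
      ((G.erase x ×ˢ G.erase x).filter fun p => p.1 < p.2 ∧ R p.1 p.2) =
      (G.filter fun y => R x y).image fun y => (min x y, max x y) := by
    ext ⟨a, b⟩
    simp only [mem_sdiff, mem_filter, mem_product, mem_erase, mem_image, Prod.mk.injEq]
    constructor
    · rintro ⟨⟨⟨ha, hb⟩, hab, hR⟩, hnot⟩
      rcases eq_or_ne a x with rfl | hax
      · exact ⟨b, ⟨hb, hR⟩, min_eq_left hab.le, max_eq_right hab.le⟩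
      · have hbx : b = x := by by_contra hbx; exact hnot ⟨⟨⟨hax, ha⟩, hbx, hb⟩, hab, hR⟩
        subst hbx
        exact ⟨a, ⟨ha, symm_of R hR⟩, min_eq_right hab.le, max_eq_left hab.le⟩
    · rintro ⟨y, ⟨hy, hR⟩, rfl, rfl⟩
      have hxy : x ≠ y := fun h => irrefl_of R x (h ▸ hR)
      rcases hxy.lt_or_gt with h | h
      · simp [h.le, h, hx, hy, hR]
      · simp [h.le, h, hx, hy, symm_of R hR]
  have hinj : Set.InjOn (fun y => (min x y, max x y)) (G.filter fun y => R x y) := by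
    intro y _ z _ h
    grind
  rw [← card_sdiff_add_card_eq_card hsub, hdiff, card_image_of_injOn hinj, add_comm]

theorem exists_subset_localCrossingDegree_le [LinearOrder α] [Std.Symm R] [Std.Irrefl R]
    (ℓ : ℕ) (G : Finset α) :
    ∃ G' ⊆ G, (∀ x ∈ G', localCrossingDegree R G' x ≤ ℓ) ∧
      crossingNumber R G' + (ℓ + 1) * #(G \ G') ≤ crossingNumber R G := by
  induction G using strongInduction with
  | H G ih =>
    by_cases hG : ∀ x ∈ G, localCrossingDegree R G x ≤ ℓ
    · exact ⟨G, subset_rfl, hG, by simp⟩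
    push Not at hG
    obtain ⟨x, hx, hdeg⟩ := hG
    obtain ⟨G', hG', hG'deg, hcr⟩ := ih (G.erase x) (erase_ssubset hx)
    have hcard : #(G \ G') = #(G.erase x \ G') + 1 := by
      have hxG' : x ∉ G' := fun h => (mem_erase.mp (hG' h)).1 rfl
      rw [erase_sdiff_comm, card_erase_add_one (mem_sdiff.mpr ⟨hx, hxG'⟩)]
    refine ⟨G', hG'.trans (erase_subset x G), hG'deg, ?_⟩
    rw [← crossingNumber_erase_add hx, hcard]
    linarith

theorem le_crossingNumber_of_subset [LinearOrder α] [Std.Symm R] [Std.Irrefl R]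
    {E G : Finset α} (hGE : G ⊆ E) (m : ℕ) :
    (m : ℤ) * #G - ∑ ℓ ∈ range m, (maxCardLocalCrossingLE R E ℓ : ℤ) ≤ crossingNumber R G := by
  induction m generalizing G with
  | zero => simp
  | succ m ih =>
    obtain ⟨G', hG', hG'deg, hcr⟩ := exists_subset_localCrossingDegree_le (R := R) m G
    have hG'E := card_le_maxCardLocalCrossingLE (hG'.trans hGE) hG'deg
    have hG'cr := ih (hG'.trans hGE)
    rw [card_sdiff_of_subset hG'] at hcr
    zify [card_le_card hG'] at hcr hG'E
    rw [sum_range_succ]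
    push_cast
    linarith

end Crossing

theorem stmt5 {α : Type*} [LinearOrder α] (E : Finset α)
    (R : α → α → Prop) [DecidableRel R] (hsymm : Symmetric R) (hirr : Irreflexive R)
    (k : ℕ) (H : Fin k → Finset α)
    (hdisj : ∀ i j, i ≠ j → Disjoint (H i) (H j))
    (hunion : Finset.univ.biUnion H = E)
    (m : ℕ) :
    (m : ℤ) * E.card -
        (k : ℤ) * ∑ ℓ ∈ Finset.range m,
          ((sSup {s : ℕ | ∃ G ⊆ E, (∀ x ∈ G, (G.filter (fun y => R x y)).card ≤ ℓ) ∧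
              G.card = s} : ℕ) : ℤ) ≤
      ∑ i : Fin k, ((((H i) ×ˢ (H i)).filter (fun p => p.1 < p.2 ∧ R p.1 p.2)).card : ℤ) := by
  have : Std.Symm R := ⟨fun _ _ => @hsymm _ _⟩
  have : Std.Irrefl R := ⟨hirr⟩
  have hcard : ∑ i, (#(H i) : ℤ) = #E := by
    rw [← hunion, card_biUnion fun i _ j _ hij => hdisj i j hij]
    push_cast; rfl
  have hclass i : H i ⊆ E := hunion ▸ subset_biUnion_of_mem H (mem_univ i)
  calc (m : ℤ) * #E - k * ∑ ℓ ∈ range m, (maxCardLocalCrossingLE R E ℓ : ℤ)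
      = ∑ i, ((m : ℤ) * #(H i) - ∑ ℓ ∈ range m, (maxCardLocalCrossingLE R E ℓ : ℤ)) := by
        rw [sum_sub_distrib, ← mul_sum, hcard, sum_const, card_univ, Fintype.card_fin, nsmul_eq_mul]
    _ ≤ ∑ i, (crossingNumber R (H i) : ℤ) :=
        sum_le_sum fun i _ => le_crossingNumber_of_subset (hclass i) m
end

section
/- In the convex model on n ≥ 3 vertices (edges are diagonals of a convex polygon, crossing determined by index interleaving), let e_1(n) be the maximum number of diagonals such that each chosen diagonal is crossed by at most one other chosen diagonal. Then e_1(n) = (3/2)(n−3) + 1/2 if n is even, and e_1(n) = (3/2)(n−3) if n is odd; equivalently e_1(n) = ⌊(3n−9+δ)/2⌋ with δ = 1 for n even and 0 for n odd. -/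
/-- A diagonal of the convex n-gon with vertices v_1,…,v_n: a pair (a,b) with
1 ≤ a < b ≤ n that is not a side of the polygon. -/
def IsDiag (n : ℕ) (p : ℕ × ℕ) : Prop :=
  1 ≤ p.1 ∧ p.1 < p.2 ∧ p.2 ≤ n ∧ p.2 - p.1 ≠ 1 ∧ ¬(p.1 = 1 ∧ p.2 = n)

instance (n : ℕ) (p : ℕ × ℕ) : Decidable (IsDiag n p) := by
  unfold IsDiag; infer_instance

/-- Two diagonals v_a v_b (a<b) and v_c v_d (c<d) cross iff a<c<b<d or c<a<d<b. -/
def Crosses (p q : ℕ × ℕ) : Prop :=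
  (p.1 < q.1 ∧ q.1 < p.2 ∧ p.2 < q.2) ∨ (q.1 < p.1 ∧ p.1 < q.2 ∧ q.2 < p.2)

instance (p q : ℕ × ℕ) : Decidable (Crosses p q) := by
  unfold Crosses; infer_instance

/-- The set of diagonals has local crossing number at most ℓ:
each chosen diagonal is crossed by at most ℓ other chosen diagonals. -/
def LcnLE (G : Finset (ℕ × ℕ)) (ℓ : ℕ) : Prop :=
  ∀ d ∈ G, (G.filter (fun d' => Crosses d d')).card ≤ ℓ

/-- All diagonals of the convex n-gon. -/
def allDiags (n : ℕ) : Finset (ℕ × ℕ) :=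
  ((Finset.Icc 1 n) ×ˢ (Finset.Icc 1 n)).filter (fun p => IsDiag n p)



set_option maxHeartbeats 1000000


lemma crosses_symm {p q : ℕ × ℕ} (h : Crosses p q) : Crosses q p := by
  unfold Crosses at *; tauto

lemma crosses_irrefl (p : ℕ × ℕ) : ¬ Crosses p p := by
  unfold Crosses; omega

/-- noncrossing chords of an interval [x..y] number at most y - x - 1. -/
lemma nonX : ∀ (k x y : ℕ) (S : Finset (ℕ × ℕ)), y - x ≤ k →
    (∀ p ∈ S, x ≤ p.1 ∧ p.1 + 2 ≤ p.2 ∧ p.2 ≤ y) →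
    (∀ p ∈ S, ∀ q ∈ S, p ≠ q → ¬ Crosses p q) →
    S.card ≤ y - x - 1 := by
  intro k
  induction k using Nat.strong_induction_on with
  | _ k IH =>
  intro x y S hk hmem hnc
  rcases (S.erase (x, y)).eq_empty_or_nonempty with he | he
  · -- S ⊆ {(x,y)}
    have hsub : S ⊆ {(x, y)} := by
      intro p hp
      rcases eq_or_ne p (x, y) with h | h
      · simp [h]
      · exact absurd (Finset.mem_erase.mpr ⟨h, hp⟩) (by simp [he])
    rcases S.eq_empty_or_nonempty with h0 | ⟨p, hp⟩
    · simp [h0]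
    · have := hmem p hp
      have h1 := hsub hp
      simp at h1
      have : x + 2 ≤ y := by
        obtain ⟨h1a, h1b⟩ := h1
        omega
      calc S.card ≤ ({(x,y)} : Finset (ℕ × ℕ)).card := Finset.card_le_card hsub
        _ = 1 := by simp
        _ ≤ y - x - 1 := by omega
  · obtain ⟨⟨a, b⟩, hab, hmax⟩ := Finset.exists_max_image (S.erase (x,y)) (fun p => p.2 - p.1) he
    have habS : (a, b) ∈ S := Finset.mem_of_mem_erase hab
    have habne : (a, b) ≠ (x, y) := (Finset.mem_erase.mp hab).1
    obtain ⟨hxa, hab2, hby⟩ := hmem _ habS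
    simp only at hxa hab2 hby
    have hne' : x < a ∨ b < y := by
      by_contra hcon
      push_neg at hcon
      exact habne (by simp [Prod.ext_iff]; omega)
    -- trichotomy
    have htri : ∀ p ∈ S, p ≠ (x, y) → (a ≤ p.1 ∧ p.2 ≤ b) ∨ p.2 ≤ a ∨ b ≤ p.1 := by
      intro p hp hpne
      obtain ⟨hxp, hp2, hpy⟩ := hmem p hp
      have hsp : p.2 - p.1 ≤ b - a := hmax p (Finset.mem_erase.mpr ⟨hpne, hp⟩)
      rcases eq_or_ne p (a, b) with h | h
      · left; simp [h]
      · have h1 : ¬ Crosses (a, b) p := hnc _ habS p hp (by simp [Prod.ext_iff] at h ⊢; omega)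
        unfold Crosses at h1
        simp only at h1
        omega
    set G1 := S.filter (fun p => a ≤ p.1 ∧ p.2 ≤ b) with hG1
    set G2 := S.filter (fun p => p.2 ≤ a) with hG2
    set G3 := S.filter (fun p => b ≤ p.1) with hG3
    have hsub : S ⊆ insert (x, y) (G1 ∪ G2 ∪ G3) := by
      intro p hp
      rcases eq_or_ne p (x, y) with h | h
      · simp [h]
      · rcases htri p hp h with h' | h' | h' <;>
          simp [Finset.mem_insert, Finset.mem_union, hG1, hG2, hG3, Finset.mem_filter, hp, h']
    have hb1 : G1.card ≤ b - a - 1 := by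
      apply IH (b - a) (by omega) a b
      · exact le_rfl
      · intro p hp
        simp only [hG1, Finset.mem_filter] at hp
        have := hmem p hp.1
        omega
      · intro p hp q hq
        exact hnc p (Finset.filter_subset _ _ hp) q (Finset.filter_subset _ _ hq)
    have hb2 : G2.card ≤ a - x - 1 := by
      apply IH (a - x) (by omega) x a
      · exact le_rfl
      · intro p hp
        simp only [hG2, Finset.mem_filter] at hp
        have := hmem p hp.1
        omega
      · intro p hp q hq
        exact hnc p (Finset.filter_subset _ _ hp) q (Finset.filter_subset _ _ hq)
    have hb3 : G3.card ≤ y - b - 1 := by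
      apply IH (y - b) (by omega) b y
      · exact le_rfl
      · intro p hp
        simp only [hG3, Finset.mem_filter] at hp
        have := hmem p hp.1
        omega
      · intro p hp q hq
        exact hnc p (Finset.filter_subset _ _ hp) q (Finset.filter_subset _ _ hq)
    have := Finset.card_le_card hsub
    have h4 := Finset.card_insert_le (x, y) (G1 ∪ G2 ∪ G3)
    have h5 := Finset.card_union_le (G1 ∪ G2) G3
    have h6 := Finset.card_union_le G1 G2
    omega

/-- noncrossing diagonals of the n-gon number at most n - 3. -/
lemma nonX_gon (n : ℕ) (S : Finset (ℕ × ℕ))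
    (hmem : ∀ p ∈ S, 1 ≤ p.1 ∧ p.1 + 2 ≤ p.2 ∧ p.2 ≤ n ∧ ¬(p.1 = 1 ∧ p.2 = n))
    (hnc : ∀ p ∈ S, ∀ q ∈ S, p ≠ q → ¬ Crosses p q) :
    S.card ≤ n - 3 := by
  rcases S.eq_empty_or_nonempty with h0 | he
  · simp [h0]
  obtain ⟨⟨a, b⟩, habS, hmax⟩ := Finset.exists_max_image S (fun p => p.2 - p.1) he
  obtain ⟨hxa, hab2, hby, habne⟩ := hmem _ habS
  simp only at hxa hab2 hby habne
  have htri : ∀ p ∈ S, (a ≤ p.1 ∧ p.2 ≤ b) ∨ p.2 ≤ a ∨ b ≤ p.1 := by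
    intro p hp
    obtain ⟨hxp, hp2, hpy, -⟩ := hmem p hp
    have hsp : p.2 - p.1 ≤ b - a := hmax p hp
    rcases eq_or_ne p (a, b) with h | h
    · left; simp [h]
    · have h1 : ¬ Crosses (a, b) p := hnc _ habS p hp (by simp [Prod.ext_iff] at h ⊢; omega)
      unfold Crosses at h1
      simp only at h1
      omega
  set G1 := S.filter (fun p => a ≤ p.1 ∧ p.2 ≤ b) with hG1
  set G2 := S.filter (fun p => p.2 ≤ a) with hG2
  set G3 := S.filter (fun p => b ≤ p.1) with hG3
  have hsub : S ⊆ G1 ∪ G2 ∪ G3 := by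
    intro p hp
    rcases htri p hp with h' | h' | h' <;>
      simp [Finset.mem_union, hG1, hG2, hG3, Finset.mem_filter, hp, h']
  have hb1 : G1.card ≤ b - a - 1 := by
    apply nonX (b - a) a b _ le_rfl
    · intro p hp
      simp only [hG1, Finset.mem_filter] at hp
      have := hmem p hp.1
      omega
    · intro p hp q hq
      exact hnc p (Finset.filter_subset _ _ hp) q (Finset.filter_subset _ _ hq)
  have hb2 : G2.card ≤ a - 1 - 1 := by
    apply nonX (a - 1) 1 a _ le_rfl
    · intro p hp
      simp only [hG2, Finset.mem_filter] at hp
      have := hmem p hp.1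
      omega
    · intro p hp q hq
      exact hnc p (Finset.filter_subset _ _ hp) q (Finset.filter_subset _ _ hq)
  have hb3 : G3.card ≤ n - b - 1 := by
    apply nonX (n - b) b n _ le_rfl
    · intro p hp
      simp only [hG3, Finset.mem_filter] at hp
      have := hmem p hp.1
      omega
    · intro p hp q hq
      exact hnc p (Finset.filter_subset _ _ hp) q (Finset.filter_subset _ _ hq)
  have := Finset.card_le_card hsub
  have h5 := Finset.card_union_le (G1 ∪ G2) G3
  have h6 := Finset.card_union_le G1 G2
  have hne' : 1 < a ∨ b < n := by
    by_contra hcon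
    push_neg at hcon
    omega
  omega

lemma five_group (p q r s x y : ℕ) (P : Finset (ℕ × ℕ))
    (hpq : p < q) (hqr : q < r) (hrs : r < s)
    (hPR : (p, r) ∈ P) (hQS : (q, s) ∈ P)
    (hmem : ∀ w ∈ P, x ≤ w.1 ∧ w.1 + 2 ≤ w.2 ∧ w.2 ≤ y)
    (hfil1 : P.filter (fun w => Crosses (p, r) w) = {(q, s)})
    (hfil2 : P.filter (fun w => Crosses (q, s) w) = {(p, r)})
    (hsp : ∀ w ∈ P, w.2 - w.1 ≤ r - p ∨ w.2 - w.1 ≤ s - q)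
    (hmatch : ∀ w ∈ P, (P.filter (fun q' => Crosses w q')).card = 1)
    (hIH : ∀ x' y' (P' : Finset (ℕ × ℕ)), y' - x' < y - x →
        (∀ w ∈ P', x' ≤ w.1 ∧ w.1 + 2 ≤ w.2 ∧ w.2 ≤ y') →
        (∀ w ∈ P', (P'.filter (fun q' => Crosses w q')).card = 1) →
        P'.card ≤ y' - x' - 1) :
    P.card ≤ y - x - 1 := by
  obtain ⟨hxp, -, hry⟩ := hmem _ hPR
  obtain ⟨-, -, hsy⟩ := hmem _ hQS
  simp only at hxp hry hsy
  have hnc1 : ∀ w ∈ P, w ≠ (q, s) → ¬ Crosses (p, r) w := by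
    intro w hw hne hc
    have : w ∈ P.filter (fun w => Crosses (p, r) w) := Finset.mem_filter.mpr ⟨hw, hc⟩
    rw [hfil1] at this
    exact hne (by simpa using this)
  have hnc2 : ∀ w ∈ P, w ≠ (p, r) → ¬ Crosses (q, s) w := by
    intro w hw hne hc
    have : w ∈ P.filter (fun w => Crosses (q, s) w) := Finset.mem_filter.mpr ⟨hw, hc⟩
    rw [hfil2] at this
    exact hne (by simpa using this)
  have htri : ∀ w ∈ P, w ≠ (p, r) → w ≠ (q, s) →
      w.2 ≤ p ∨ (p ≤ w.1 ∧ w.2 ≤ q) ∨ (q ≤ w.1 ∧ w.2 ≤ r) ∨ (r ≤ w.1 ∧ w.2 ≤ s) ∨ s ≤ w.1 := by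
    intro w hw hne1 hne2
    obtain ⟨hxw, hw2, hwy⟩ := hmem w hw
    have h1 := hnc1 w hw hne2
    have h2 := hnc2 w hw hne1
    have h3 := hsp w hw
    unfold Crosses at h1 h2
    simp only at h1 h2
    omega
  have key : ∀ lo hi : ℕ,
      ((lo = x ∧ hi = p) ∨ (lo = p ∧ hi = q) ∨ (lo = q ∧ hi = r) ∨ (lo = r ∧ hi = s) ∨
        (lo = s ∧ hi = y)) →
      (P.filter (fun w => lo ≤ w.1 ∧ w.2 ≤ hi)).card ≤ hi - lo - 1 := by
    intro lo hi hcase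
    set Gi := P.filter (fun w => lo ≤ w.1 ∧ w.2 ≤ hi) with hGi
    apply hIH lo hi Gi (by omega)
    · intro w hw
      simp only [hGi, Finset.mem_filter] at hw
      have := hmem w hw.1
      omega
    · intro w hw
      simp only [hGi, Finset.mem_filter] at hw
      obtain ⟨hwP, hlo, hhi⟩ := hw
      obtain ⟨z, hz⟩ := Finset.card_eq_one.mp (hmatch w hwP)
      have hzmem : z ∈ P.filter (fun q' => Crosses w q') := by rw [hz]; simp
      obtain ⟨hzP, hzc⟩ := Finset.mem_filter.mp hzmem
      have hwgap := (hmem w hwP).2.1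
      have hwne1 : w ≠ (p, r) := by
        rintro rfl
        have hlo' : lo ≤ p := hlo
        have hhi' : r ≤ hi := hhi
        omega
      have hwne2 : w ≠ (q, s) := by
        rintro rfl
        have hlo' : lo ≤ q := hlo
        have hhi' : s ≤ hi := hhi
        omega
      have hzne1 : z ≠ (p, r) := by
        rintro rfl
        exact hnc1 w hwP hwne2 (crosses_symm hzc)
      have hzne2 : z ≠ (q, s) := by
        rintro rfl
        exact hnc2 w hwP hwne1 (crosses_symm hzc)
      have hztri := htri z hzP hzne1 hzne2
      have hzb := hmem z hzP
      have hzin : lo ≤ z.1 ∧ z.2 ≤ hi := by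
        have hend : (w.1 < z.1 ∧ z.1 < w.2) ∨ (w.1 < z.2 ∧ z.2 < w.2) := by
          unfold Crosses at hzc; omega
        omega
      have hzGi : z ∈ Gi := by
        simp only [hGi, Finset.mem_filter]
        exact ⟨hzP, hzin⟩
      have hfe : Gi.filter (fun q' => Crosses w q') = {z} := by
        apply Finset.Subset.antisymm
        · rw [← hz]
          intro u hu
          simp only [Finset.mem_filter, hGi] at hu ⊢
          exact ⟨hu.1.1, hu.2⟩
        · simp only [Finset.singleton_subset_iff, Finset.mem_filter]
          exact ⟨hzGi, hzc⟩
      rw [hfe]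
      simp
  set F1 := P.filter (fun w => x ≤ w.1 ∧ w.2 ≤ p) with hF1
  set F2 := P.filter (fun w => p ≤ w.1 ∧ w.2 ≤ q) with hF2
  set F3 := P.filter (fun w => q ≤ w.1 ∧ w.2 ≤ r) with hF3
  set F4 := P.filter (fun w => r ≤ w.1 ∧ w.2 ≤ s) with hF4
  set F5 := P.filter (fun w => s ≤ w.1 ∧ w.2 ≤ y) with hF5
  have hsub : P ⊆ insert (p, r) (insert (q, s) ((F1 ∪ F2 ∪ F3) ∪ (F4 ∪ F5))) := by
    intro w hw
    rcases eq_or_ne w (p, r) with h | h1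
    · simp [h]
    rcases eq_or_ne w (q, s) with h | h2
    · simp [h]
    have h3 := htri w hw h1 h2
    have h4 := hmem w hw
    simp only [Finset.mem_insert, Finset.mem_union, hF1, hF2, hF3, hF4, hF5,
      Finset.mem_filter]
    rcases h3 with h | h | h | h | h
    · right; right; left; left; left; exact ⟨hw, by omega, by omega⟩
    · right; right; left; left; right; exact ⟨hw, by omega, by omega⟩
    · right; right; left; right; exact ⟨hw, by omega, by omega⟩
    · right; right; right; left; exact ⟨hw, by omega, by omega⟩
    · right; right; right; right; exact ⟨hw, by omega, by omega⟩
  have hc := Finset.card_le_card hsub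
  have c1 := key x p (by tauto)
  have c2 := key p q (by tauto)
  have c3 := key q r (by tauto)
  have c4 := key r s (by tauto)
  have c5 := key s y (by tauto)
  rw [← hF1] at c1
  rw [← hF2] at c2
  rw [← hF3] at c3
  rw [← hF4] at c4
  rw [← hF5] at c5
  have i1 := Finset.card_insert_le (p, r) (insert (q, s) ((F1 ∪ F2 ∪ F3) ∪ (F4 ∪ F5)))
  have i2 := Finset.card_insert_le (q, s) ((F1 ∪ F2 ∪ F3) ∪ (F4 ∪ F5))
  have u1 := Finset.card_union_le (F1 ∪ F2 ∪ F3) (F4 ∪ F5)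
  have u2 := Finset.card_union_le (F1 ∪ F2) F3
  have u3 := Finset.card_union_le F1 F2
  have u4 := Finset.card_union_le F4 F5
  omega

/-- A set of chords of [x..y] in which every chord crosses exactly one other
has at most y - x - 1 elements. -/
lemma matched_bound : ∀ (k x y : ℕ) (P : Finset (ℕ × ℕ)), y - x ≤ k →
    (∀ w ∈ P, x ≤ w.1 ∧ w.1 + 2 ≤ w.2 ∧ w.2 ≤ y) →
    (∀ w ∈ P, (P.filter (fun q' => Crosses w q')).card = 1) →
    P.card ≤ y - x - 1 := by
  intro k
  induction k using Nat.strong_induction_on with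
  | _ k IH =>
  intro x y P hk hmem hmatch
  rcases P.eq_empty_or_nonempty with h0 | he
  · simp [h0]
  obtain ⟨⟨a, b⟩, habP, hmax⟩ := Finset.exists_max_image P (fun w => w.2 - w.1) he
  obtain ⟨z, hz⟩ := Finset.card_eq_one.mp (hmatch _ habP)
  have hzmem : z ∈ P.filter (fun q' => Crosses (a, b) q') := by rw [hz]; simp
  obtain ⟨hzP, hzc⟩ := Finset.mem_filter.mp hzmem
  have hzfil : P.filter (fun q' => Crosses z q') = {(a, b)} := by
    obtain ⟨u, hu⟩ := Finset.card_eq_one.mp (hmatch _ hzP)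
    have : (a, b) ∈ P.filter (fun q' => Crosses z q') :=
      Finset.mem_filter.mpr ⟨habP, crosses_symm hzc⟩
    rw [hu] at this ⊢
    simp at this
    rw [this]
  have hIH' : ∀ x' y' (P' : Finset (ℕ × ℕ)), y' - x' < y - x →
      (∀ w ∈ P', x' ≤ w.1 ∧ w.1 + 2 ≤ w.2 ∧ w.2 ≤ y') →
      (∀ w ∈ P', (P'.filter (fun q' => Crosses w q')).card = 1) →
      P'.card ≤ y' - x' - 1 := by
    intro x' y' P' hlt hm1 hm2
    exact IH (y' - x') (by omega) x' y' P' le_rfl hm1 hm2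
  obtain ⟨z1, z2⟩ := z
  have hspall : ∀ w ∈ P, w.2 - w.1 ≤ b - a := hmax
  rcases hzc with ⟨h1, h2, h3⟩ | ⟨h1, h2, h3⟩
  · -- a < z1 < b < z2 : pattern p=a, q=z1, r=b, s=z2
    simp only at h1 h2 h3
    refine five_group a z1 b z2 x y P h1 h2 h3 habP hzP hmem hz hzfil ?_ hmatch hIH'
    intro w hw
    have := hspall w hw
    left; simpa using this
  · -- z1 < a < z2 < b : pattern p=z1, q=a, r=z2, s=b
    simp only at h1 h2 h3
    refine five_group z1 a z2 b x y P h1 h2 h3 hzP habP hmem hzfil hz ?_ hmatch hIH'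
    intro w hw
    have := hspall w hw
    right; simpa using this

lemma upper_bound (n : ℕ) (hn : 3 ≤ n) (G : Finset (ℕ × ℕ))
    (hdiag : ∀ p ∈ G, IsDiag n p) (hlcn : LcnLE G 1) :
    G.card ≤ (3 * n - 9 + (if Even n then 1 else 0)) / 2 := by
  classical
  have hbnd : ∀ p ∈ G, 1 ≤ p.1 ∧ p.1 + 2 ≤ p.2 ∧ p.2 ≤ n ∧ ¬(p.1 = 1 ∧ p.2 = n) := by
    intro p hp
    obtain ⟨h1, h2, h3, h4, h5⟩ := hdiag p hp
    exact ⟨h1, by omega, h3, h5⟩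
  set U := G.filter (fun e => (G.filter (fun q' => Crosses e q')).card = 0) with hU
  set P := G.filter (fun e => (G.filter (fun q' => Crosses e q')).card = 1) with hP
  -- key n+1 encoding for lexicographic tie-breaking
  set key : ℕ × ℕ → ℕ := fun e => e.1 * (n + 1) + e.2 with hkey
  have hkeyinj : ∀ e ∈ G, ∀ e' ∈ G, key e = key e' → e = e' := by
    intro e he e' he' hk
    have h1 := hbnd e he
    have h2 := hbnd e' he'
    have h1' : e.2 ≤ n := h1.2.2.1
    have h2' : e'.2 ≤ n := h2.2.2.1
    simp only [hkey] at hk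
    have h11 : e.1 = e'.1 := by
      rcases Nat.lt_trichotomy e.1 e'.1 with h | h | h
      · have h3 : (e.1 + 1) * (n + 1) ≤ e'.1 * (n + 1) :=
          Nat.mul_le_mul_right _ (by omega)
        nlinarith
      · exact h
      · have h3 : (e'.1 + 1) * (n + 1) ≤ e.1 * (n + 1) :=
          Nat.mul_le_mul_right _ (by omega)
        nlinarith
    rw [h11] at hk
    exact Prod.ext h11 (Nat.add_left_cancel hk)
  -- partner function
  set f : ℕ × ℕ → ℕ × ℕ := fun e =>
    if h : ∃ z, G.filter (fun q' => Crosses e q') = {z} then h.choose else (0, 0) with hf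
  have hpart : ∀ e ∈ P, G.filter (fun q' => Crosses e q') = {f e} := by
    intro e he
    have hc1 : (G.filter (fun q' => Crosses e q')).card = 1 := (Finset.mem_filter.mp he).2
    obtain ⟨z, hz⟩ := Finset.card_eq_one.mp hc1
    have hex : ∃ z, G.filter (fun q' => Crosses e q') = {z} := ⟨z, hz⟩
    simp only [hf, dif_pos hex]
    exact hex.choose_spec
  have hfG : ∀ e ∈ P, f e ∈ G ∧ Crosses e (f e) := by
    intro e he
    have : f e ∈ G.filter (fun q' => Crosses e q') := by rw [hpart e he]; simp
    exact ⟨(Finset.mem_filter.mp this).1, (Finset.mem_filter.mp this).2⟩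
  have hfP : ∀ e ∈ P, f e ∈ P := by
    intro e he
    have heG : e ∈ G := (Finset.mem_filter.mp he).1
    obtain ⟨hfeG, hc⟩ := hfG e he
    have h1 : e ∈ G.filter (fun q' => Crosses (f e) q') :=
      Finset.mem_filter.mpr ⟨heG, crosses_symm hc⟩
    have h2 := hlcn (f e) hfeG
    have h3 : 1 ≤ (G.filter (fun q' => Crosses (f e) q')).card :=
      Finset.card_pos.mpr ⟨e, h1⟩
    exact Finset.mem_filter.mpr ⟨hfeG, by omega⟩
  have hff : ∀ e ∈ P, f (f e) = e := by
    intro e he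
    have heG : e ∈ G := (Finset.mem_filter.mp he).1
    obtain ⟨hfeG, hc⟩ := hfG e he
    have h1 : e ∈ G.filter (fun q' => Crosses (f e) q') :=
      Finset.mem_filter.mpr ⟨heG, crosses_symm hc⟩
    rw [hpart (f e) (hfP e he)] at h1
    exact (Finset.mem_singleton.mp h1).symm
  have hfne : ∀ e ∈ P, f e ≠ e := by
    intro e he hEq
    obtain ⟨-, hc⟩ := hfG e he
    rw [hEq] at hc
    exact crosses_irrefl e hc
  have huniq : ∀ e ∈ P, ∀ w ∈ G, Crosses e w → w = f e := by
    intro e he w hw hc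
    have : w ∈ G.filter (fun q' => Crosses e q') := Finset.mem_filter.mpr ⟨hw, hc⟩
    rw [hpart e he] at this
    simpa using this
  set kept := P.filter (fun e => ∀ e' ∈ G, Crosses e e' → key e < key e') with hkept
  set unkept := P \ kept with hunkept
  -- unkept e has f e kept, and vice versa
  have h_un_to_k : ∀ e ∈ unkept, f e ∈ kept := by
    intro e he
    obtain ⟨heP, hnk⟩ := Finset.mem_sdiff.mp he
    have heG : e ∈ G := (Finset.mem_filter.mp heP).1
    simp only [hkept, Finset.mem_filter] at hnk
    push_neg at hnk
    obtain ⟨w, hwG, hwc, hwk⟩ := hnk heP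
    have hwfe : w = f e := huniq e heP w hwG hwc
    rw [hwfe] at hwk
    have hlt : key (f e) < key e := by
      rcases lt_or_eq_of_le hwk with h | h
      · exact h
      · exact absurd (hkeyinj _ (hfG e heP).1 _ heG h) (hfne e heP)
    refine Finset.mem_filter.mpr ⟨hfP e heP, ?_⟩
    intro e' he' hce'
    have he'' : e' = f (f e) := huniq (f e) (hfP e heP) e' he' hce'
    rw [he'', hff e heP]
    exact hlt
  have h_k_to_un : ∀ e ∈ kept, f e ∈ unkept := by
    intro e he
    obtain ⟨heP, hk⟩ := Finset.mem_filter.mp he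
    obtain ⟨hfeG, hc⟩ := hfG e heP
    have hlt : key e < key (f e) := hk (f e) hfeG hc
    refine Finset.mem_sdiff.mpr ⟨hfP e heP, ?_⟩
    intro hcon
    have hk2 := (Finset.mem_filter.mp hcon).2
    have heG : e ∈ G := (Finset.mem_filter.mp heP).1
    have : key (f e) < key e := hk2 e heG (crosses_symm hc)
    omega
  have hinj : ∀ s : Finset (ℕ × ℕ), s ⊆ P → (∀ e1 ∈ s, ∀ e2 ∈ s, f e1 = f e2 → e1 = e2) := by
    intro s hs e1 h1 e2 h2 hEq
    have := hff e1 (hs h1)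
    rw [hEq, hff e2 (hs h2)] at this
    exact this.symm
  have hcard1 : unkept.card ≤ kept.card := by
    apply Finset.card_le_card_of_injOn f h_un_to_k
    intro e1 h1 e2 h2
    exact hinj unkept (Finset.sdiff_subset) e1 h1 e2 h2
  have hcard2 : kept.card ≤ unkept.card := by
    apply Finset.card_le_card_of_injOn f h_k_to_un
    intro e1 h1 e2 h2
    exact hinj kept (Finset.filter_subset _ _) e1 h1 e2 h2
  have hPsplit : unkept.card + kept.card = P.card :=
    Finset.card_sdiff_add_card_eq_card (Finset.filter_subset _ _)
  -- G ⊆ U ∪ P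
  have hGsub : G ⊆ U ∪ P := by
    intro e he
    have := hlcn e he
    simp only [hU, hP, Finset.mem_union, Finset.mem_filter]
    rcases Nat.lt_or_ge (G.filter (fun q' => Crosses e q')).card 1 with h | h
    · left; exact ⟨he, by omega⟩
    · right; exact ⟨he, by omega⟩
  -- S = U ∪ kept is noncrossing
  have hSnc : ∀ p ∈ U ∪ kept, ∀ q ∈ U ∪ kept, p ≠ q → ¬ Crosses p q := by
    intro a ha b hb hne hc
    have haG : a ∈ G := by
      rcases Finset.mem_union.mp ha with h | h
      · exact (Finset.mem_filter.mp h).1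
      · exact (Finset.mem_filter.mp ((Finset.filter_subset _ _) h)).1
    have hbG : b ∈ G := by
      rcases Finset.mem_union.mp hb with h | h
      · exact (Finset.mem_filter.mp h).1
      · exact (Finset.mem_filter.mp ((Finset.filter_subset _ _) h)).1
    rcases Finset.mem_union.mp ha with h | h
    · -- a uncrossed
      have h0 := (Finset.mem_filter.mp h).2
      have : b ∈ G.filter (fun q' => Crosses a q') := Finset.mem_filter.mpr ⟨hbG, hc⟩
      have := Finset.card_pos.mpr ⟨b, this⟩
      omega
    · rcases Finset.mem_union.mp hb with h' | h'
      · have h0 := (Finset.mem_filter.mp h').2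
        have : a ∈ G.filter (fun q' => Crosses b q') :=
          Finset.mem_filter.mpr ⟨haG, crosses_symm hc⟩
        have := Finset.card_pos.mpr ⟨a, this⟩
        omega
      · -- both kept
        have hka := (Finset.mem_filter.mp h).2
        have hkb := (Finset.mem_filter.mp h').2
        have h1 := hka b hbG hc
        have h2 := hkb a haG (crosses_symm hc)
        omega
  have hSbound : (U ∪ kept).card ≤ n - 3 := by
    apply nonX_gon n
    · intro p hp
      apply hbnd
      rcases Finset.mem_union.mp hp with h | h
      · exact (Finset.filter_subset _ _) h
      · exact (Finset.filter_subset _ _) ((Finset.filter_subset _ _) h)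
    · exact hSnc
  have hdisj : Disjoint U kept := by
    rw [Finset.disjoint_left]
    intro e heU heK
    have h0 := (Finset.mem_filter.mp heU).2
    have h1 := (Finset.mem_filter.mp ((Finset.filter_subset _ _) heK)).2
    omega
  have hScard : (U ∪ kept).card = U.card + kept.card := Finset.card_union_of_disjoint hdisj
  have hPbound : P.card ≤ n - 2 := by
    have := matched_bound (n - 1) 1 n P le_rfl
      (fun w hw => by
        have := hbnd w ((Finset.filter_subset _ _) hw)
        exact ⟨this.1, this.2.1, this.2.2.1⟩)
      (fun w hw => by
        have h1 := hpart w hw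
        have hfw : f w ∈ P := hfP w hw
        have hfe : P.filter (fun q' => Crosses w q') = {f w} := by
          apply Finset.Subset.antisymm
          · rw [← h1]
            intro u hu
            simp only [Finset.mem_filter] at hu ⊢
            exact ⟨(Finset.filter_subset _ _) hu.1, hu.2⟩
          · simp only [Finset.singleton_subset_iff, Finset.mem_filter]
            exact ⟨hfw, (hfG w hw).2⟩
        rw [hfe]; simp)
    omega
  have hGcard : G.card ≤ U.card + P.card := by
    calc G.card ≤ (U ∪ P).card := Finset.card_le_card hGsub
      _ ≤ U.card + P.card := Finset.card_union_le U P
  rcases Nat.even_or_odd n with hev | hod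
  · rw [if_pos hev]
    rw [Nat.even_iff] at hev
    omega
  · rw [if_neg (by simpa [Nat.odd_iff, Nat.even_iff] using hod)]
    rw [Nat.odd_iff] at hod
    omega

lemma lower_bound (n : ℕ) (hn : 3 ≤ n) :
    ∃ G : Finset (ℕ × ℕ), (∀ p ∈ G, IsDiag n p) ∧ LcnLE G 1 ∧
      G.card = (3 * n - 9 + (if Even n then 1 else 0)) / 2 := by
  classical
  set fan := (Finset.Icc 3 (n - 1)).image (fun j => ((1 : ℕ), j)) with hfan
  set short := (Finset.Icc 1 ((n - 2) / 2)).image (fun i => (2 * i, 2 * i + 2)) with hshort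
  refine ⟨fan ∪ short, ?_, ?_, ?_⟩
  · intro p hp
    rcases Finset.mem_union.mp hp with h | h
    · obtain ⟨j, hj, rfl⟩ := Finset.mem_image.mp h
      simp only [Finset.mem_Icc] at hj
      exact ⟨le_refl 1, by omega, by omega, by omega, by omega⟩
    · obtain ⟨i, hi, rfl⟩ := Finset.mem_image.mp h
      simp only [Finset.mem_Icc] at hi
      exact ⟨by omega, by omega, by omega, by omega, by omega⟩
  · intro d hd
    rcases Finset.mem_union.mp hd with h | h
    · -- fan edge (1, j): crossed only by (j-1, j+1)
      obtain ⟨j, hj, rfl⟩ := Finset.mem_image.mp h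
      simp only [Finset.mem_Icc] at hj
      have hsub : (fan ∪ short).filter (fun d' => Crosses (1, j) d') ⊆ {(j - 1, j + 1)} := by
        intro e he
        obtain ⟨heG, hec⟩ := Finset.mem_filter.mp he
        rcases Finset.mem_union.mp heG with h' | h'
        · obtain ⟨j', hj', rfl⟩ := Finset.mem_image.mp h'
          simp only [Finset.mem_Icc] at hj'
          have hec' : (1 < 1 ∧ 1 < j ∧ j < j') ∨ (1 < 1 ∧ 1 < j' ∧ j' < j) := hec
          omega
        · obtain ⟨i, hi, rfl⟩ := Finset.mem_image.mp h'
          simp only [Finset.mem_Icc] at hi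
          have hec' : (1 < 2 * i ∧ 2 * i < j ∧ j < 2 * i + 2) ∨
              (2 * i < 1 ∧ 1 < 2 * i + 2 ∧ 2 * i + 2 < j) := hec
          simp only [Finset.mem_singleton, Prod.mk.injEq]
          omega
      calc _ ≤ ({(j - 1, j + 1)} : Finset (ℕ × ℕ)).card := Finset.card_le_card hsub
        _ = 1 := by simp
    · -- short edge (2i, 2i+2): crossed only by (1, 2i+1)
      obtain ⟨i, hi, rfl⟩ := Finset.mem_image.mp h
      simp only [Finset.mem_Icc] at hi
      have hsub : (fan ∪ short).filter (fun d' => Crosses (2 * i, 2 * i + 2) d') ⊆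
          {(1, 2 * i + 1)} := by
        intro e he
        obtain ⟨heG, hec⟩ := Finset.mem_filter.mp he
        rcases Finset.mem_union.mp heG with h' | h'
        · obtain ⟨j', hj', rfl⟩ := Finset.mem_image.mp h'
          simp only [Finset.mem_Icc] at hj'
          have hec' : (2 * i < 1 ∧ 1 < 2 * i + 2 ∧ 2 * i + 2 < j') ∨
              (1 < 2 * i ∧ 2 * i < j' ∧ j' < 2 * i + 2) := hec
          simp only [Finset.mem_singleton, Prod.mk.injEq, true_and]
          omega
        · obtain ⟨i', hi', rfl⟩ := Finset.mem_image.mp h'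
          simp only [Finset.mem_Icc] at hi'
          have hec' : (2 * i < 2 * i' ∧ 2 * i' < 2 * i + 2 ∧ 2 * i + 2 < 2 * i' + 2) ∨
              (2 * i' < 2 * i ∧ 2 * i < 2 * i' + 2 ∧ 2 * i' + 2 < 2 * i + 2) := hec
          omega
      calc _ ≤ ({(1, 2 * i + 1)} : Finset (ℕ × ℕ)).card := Finset.card_le_card hsub
        _ = 1 := by simp
  · have hdisj : Disjoint fan short := by
      rw [Finset.disjoint_left]
      intro e he hs
      obtain ⟨j, hj, rfl⟩ := Finset.mem_image.mp he
      obtain ⟨i, hi, he2⟩ := Finset.mem_image.mp hs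
      simp only [Finset.mem_Icc] at hi hj
      injection he2 with h1 h2
      omega
    rw [Finset.card_union_of_disjoint hdisj]
    have hc1 : fan.card = n - 3 := by
      rw [hfan, Finset.card_image_of_injective _ (by intro a b hab; simpa using hab),
        Nat.card_Icc]
      omega
    have hc2 : short.card = (n - 2) / 2 := by
      rw [hshort, Finset.card_image_of_injective _
        (by intro a b hab; simp only [Prod.mk.injEq] at hab; omega), Nat.card_Icc]
      omega
    rw [hc1, hc2]
    rcases Nat.even_or_odd n with hev | hod
    · rw [if_pos hev]
      rw [Nat.even_iff] at hev
      omega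
    · rw [if_neg (by simpa [Nat.odd_iff, Nat.even_iff] using hod)]
      rw [Nat.odd_iff] at hod
      omega


theorem stmt7 (n : ℕ) (hn : 3 ≤ n) :
    IsGreatest {m : ℕ | ∃ G : Finset (ℕ × ℕ), (∀ p ∈ G, IsDiag n p) ∧
      LcnLE G 1 ∧ G.card = m}
      ((3 * n - 9 + (if Even n then 1 else 0)) / 2) := by
  constructor
  · obtain ⟨G, h1, h2, h3⟩ := lower_bound n hn
    exact ⟨G, h1, h2, h3⟩
  · rintro m ⟨G, h1, h2, rfl⟩
    exact upper_bound n hn G h1 h2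
end

section
/- Let G be a set of diagonals of a convex n-gon (n ≥ 3, sides excluded), with crossing determined by index interleaving. Define the crossing graph G^⊗ whose vertices are the diagonals of G, with two diagonals adjacent iff they cross. If G^⊗ is acyclic (a forest), then |G| ≤ 2n − 6. -/
/-- Bound for pairwise noncrossing families of chords in an interval. -/
lemma noncross_aux : ∀ (k a b : ℕ) (S : Finset (ℕ × ℕ)),
    b - a ≤ k →
    (∀ p ∈ S, a ≤ p.1 ∧ p.1 + 2 ≤ p.2 ∧ p.2 ≤ b) →
    (∀ p ∈ S, ∀ q ∈ S, p ≠ q → ¬ Crosses p q) →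
    S.card ≤ b - a - 1 ∧ ((a, b) ∉ S → S.card ≤ b - a - 2) := by
  intro k
  induction k using Nat.strong_induction_on with
  | _ k IH =>
  intro a b S hk hb hcr
  by_cases hab : b ≤ a + 1
  · have hS : S = ∅ := Finset.eq_empty_of_forall_notMem fun p hp => by
      have := hb p hp; omega
    simp [hS]
  push_neg at hab
  have key : ∀ T : Finset (ℕ × ℕ), T ⊆ S → (a, b) ∉ T → T.card ≤ b - a - 2 := by
    intro T hTS hTab
    have hbT : ∀ p ∈ T, a ≤ p.1 ∧ p.1 + 2 ≤ p.2 ∧ p.2 ≤ b := fun p hp => hb p (hTS hp)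
    have hcrT : ∀ p ∈ T, ∀ q ∈ T, p ≠ q → ¬ Crosses p q :=
      fun p hp q hq => hcr p (hTS hp) q (hTS hq)
    rcases T.eq_empty_or_nonempty with hT | hT
    · simp [hT]
    obtain ⟨⟨c, d⟩, hcd, hmax⟩ := T.exists_max_image (fun p => p.2 - p.1) hT
    have hcdb : a ≤ c ∧ c + 2 ≤ d ∧ d ≤ b := hbT _ hcd
    have hne : ¬(c = a ∧ d = b) := by
      rintro ⟨rfl, rfl⟩; exact hTab hcd
    have cover : ∀ p ∈ T, p.2 ≤ c ∨ (c ≤ p.1 ∧ p.2 ≤ d) ∨ d ≤ p.1 := by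
      intro p hp
      obtain ⟨x, y⟩ := p
      by_cases hpcd : (x, y) = ((c, d) : ℕ × ℕ)
      · have hx : x = c ∧ y = d := by
          rw [Prod.ext_iff] at hpcd; exact hpcd
        right; left; omega
      · have h1 : ¬((x < c ∧ c < y ∧ y < d) ∨ (c < x ∧ x < d ∧ d < y)) :=
          hcrT _ hp _ hcd hpcd
        have h2 : y - x ≤ d - c := hmax _ hp
        have h3 : a ≤ x ∧ x + 2 ≤ y ∧ y ≤ b := hbT _ hp
        have h4 : ¬(x = c ∧ y = d) := by
          rintro ⟨rfl, rfl⟩; exact hpcd rfl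
        omega
    set T1 := T.filter (fun p => p.2 ≤ c) with hT1
    set T2 := T.filter (fun p => c ≤ p.1 ∧ p.2 ≤ d) with hT2
    set T3 := T.filter (fun p => d ≤ p.1) with hT3
    have hd12 : Disjoint T1 T2 := by
      rw [Finset.disjoint_left]
      intro p h1 h2
      rw [hT1, Finset.mem_filter] at h1
      rw [hT2, Finset.mem_filter] at h2
      have := hbT p h1.1
      have h1' := h1.2; have h2' := h2.2
      omega
    have hd13 : Disjoint T1 T3 := by
      rw [Finset.disjoint_left]
      intro p h1 h2
      rw [hT1, Finset.mem_filter] at h1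
      rw [hT3, Finset.mem_filter] at h2
      have := hbT p h1.1
      have h1' := h1.2; have h2' := h2.2
      omega
    have hd23 : Disjoint T2 T3 := by
      rw [Finset.disjoint_left]
      intro p h1 h2
      rw [hT2, Finset.mem_filter] at h1
      rw [hT3, Finset.mem_filter] at h2
      have := hbT p h1.1
      have h1' := h1.2; have h2' := h2.2
      omega
    have hunion : T1 ∪ T2 ∪ T3 = T := by
      ext p
      simp only [Finset.mem_union, hT1, hT2, hT3, Finset.mem_filter]
      constructor
      · rintro ((h | h) | h) <;> exact h.1
      · intro hp
        rcases cover p hp with h | h | h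
        · exact Or.inl (Or.inl ⟨hp, h⟩)
        · exact Or.inl (Or.inr ⟨hp, h⟩)
        · exact Or.inr ⟨hp, h⟩
    have hcard : T.card = T1.card + T2.card + T3.card := by
      rw [← hunion, Finset.card_union_of_disjoint, Finset.card_union_of_disjoint hd12]
      rw [Finset.disjoint_union_left]
      exact ⟨hd13, hd23⟩
    have hb1 : T1.card ≤ c - a - 1 := by
      refine (IH (c - a) (by omega) a c T1 le_rfl ?_ ?_).1
      · intro p hp
        rw [hT1, Finset.mem_filter] at hp
        have := hbT p hp.1
        exact ⟨this.1, this.2.1, hp.2⟩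
      · intro p hp q hq
        rw [hT1, Finset.mem_filter] at hp hq
        exact hcrT p hp.1 q hq.1
    have hb3 : T3.card ≤ b - d - 1 := by
      refine (IH (b - d) (by omega) d b T3 le_rfl ?_ ?_).1
      · intro p hp
        rw [hT3, Finset.mem_filter] at hp
        have := hbT p hp.1
        exact ⟨hp.2, this.2.1, this.2.2⟩
      · intro p hp q hq
        rw [hT3, Finset.mem_filter] at hp hq
        exact hcrT p hp.1 q hq.1
    have hmem2 : ((c, d) : ℕ × ℕ) ∈ T2 := by
      rw [hT2, Finset.mem_filter]
      exact ⟨hcd, le_rfl, le_rfl⟩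
    have hb2 : (T2.erase (c, d)).card ≤ d - c - 2 := by
      refine (IH (d - c) (by omega) c d _ le_rfl ?_ ?_).2 (Finset.notMem_erase _ _)
      · intro p hp
        have hp' := Finset.mem_of_mem_erase hp
        rw [hT2, Finset.mem_filter] at hp'
        have := hbT p hp'.1
        exact ⟨hp'.2.1, this.2.1, hp'.2.2⟩
      · intro p hp q hq
        have hp' := (Finset.mem_filter.mp (Finset.mem_of_mem_erase hp)).1
        have hq' := (Finset.mem_filter.mp (Finset.mem_of_mem_erase hq)).1
        exact hcrT p hp' q hq'
    have h2card : T2.card = (T2.erase (c, d)).card + 1 := by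
      rw [Finset.card_erase_of_mem hmem2]
      have : 1 ≤ T2.card := Finset.card_pos.mpr ⟨_, hmem2⟩
      omega
    omega
  constructor
  · by_cases hmem : ((a, b) : ℕ × ℕ) ∈ S
    · have h1 := key (S.erase (a, b)) (Finset.erase_subset _ _) (Finset.notMem_erase _ _)
      have h2 := Finset.card_erase_of_mem hmem
      have h3 : 1 ≤ S.card := Finset.card_pos.mpr ⟨_, hmem⟩
      omega
    · have := key S le_rfl hmem; omega
  · exact key S le_rfl

lemma parity_lemma {V : Type*} [DecidableEq V] {G : SimpleGraph V} (h : G.IsAcyclic) {u v r s : V}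
    (hrs : r = s) (huv : G.Adj u v) (p : G.Path u r) (q : G.Path v s) :
    p.1.length % 2 ≠ q.1.length % 2 := by
  subst hrs
  by_cases hv : v ∈ p.1.support
  · have hd : q = ⟨p.1.dropUntil v hv, p.2.dropUntil hv⟩ := h.path_unique _ _
    have ht : (⟨p.1.takeUntil v hv, p.2.takeUntil hv⟩ : G.Path u v)
        = SimpleGraph.Path.singleton huv := h.path_unique _ _
    have hlen : (p.1.takeUntil v hv).length + (p.1.dropUntil v hv).length = p.1.length := by
      rw [← SimpleGraph.Walk.length_append, SimpleGraph.Walk.take_spec]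
    have h1 : (p.1.takeUntil v hv).length = 1 := by
      have := congrArg (fun x : G.Path u v => x.1.length) ht
      simpa [SimpleGraph.Path.singleton] using this
    have h2 : q.1.length = (p.1.dropUntil v hv).length := by rw [hd]
    omega
  · have hq : q = ⟨SimpleGraph.Walk.cons huv.symm p.1,
        (SimpleGraph.Walk.cons_isPath_iff _ _).mpr ⟨p.2, hv⟩⟩ := h.path_unique _ _
    have hlen : q.1.length = p.1.length + 1 := by rw [hq]; simp
    omega

lemma acyclic_twocolor {V : Type*} {G : SimpleGraph V} (h : G.IsAcyclic) :
    ∃ f : V → Bool, ∀ u v, G.Adj u v → f u ≠ f v := by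
  classical
  have hre : ∀ v : V, G.Reachable v (G.connectedComponentMk v).out := by
    intro v
    rw [← SimpleGraph.ConnectedComponent.eq]
    exact ((G.connectedComponentMk v).out_eq).symm
  refine ⟨fun v => decide (((hre v).some.toPath).1.length % 2 = 0), ?_⟩
  intro u v huv
  have hr : (G.connectedComponentMk u).out = (G.connectedComponentMk v).out := by
    rw [show G.connectedComponentMk u = G.connectedComponentMk v from
      SimpleGraph.ConnectedComponent.eq.mpr huv.reachable]
  have hpar := parity_lemma h hr huv ((hre u).some.toPath) ((hre v).some.toPath)
  simp only [ne_eq, decide_eq_decide]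
  omega

theorem stmt9 (n : ℕ) (hn : 3 ≤ n) (G : Finset (ℕ × ℕ))
    (hG : ∀ p ∈ G, IsDiag n p)
    (hacyc : (SimpleGraph.fromRel
        (fun x y : {p : ℕ × ℕ // p ∈ G} => Crosses x.1 y.1)).IsAcyclic) :
    G.card ≤ 2 * n - 6 := by
  classical
  obtain ⟨f, hf⟩ := acyclic_twocolor hacyc
  have key : ∀ (B : Finset {p : ℕ × ℕ // p ∈ G}),
      (∀ x ∈ B, ∀ y ∈ B, x ≠ y → ¬ Crosses x.1 y.1) → B.card ≤ n - 3 := by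
    intro B hB
    have himg : (B.image Subtype.val).card = B.card :=
      Finset.card_image_of_injective _ Subtype.val_injective
    set C := B.image Subtype.val with hC
    have h1 : ∀ p ∈ C, 1 ≤ p.1 ∧ p.1 + 2 ≤ p.2 ∧ p.2 ≤ n := by
      intro p hp
      obtain ⟨x, hx, rfl⟩ := Finset.mem_image.mp hp
      obtain ⟨a1, a2, a3, a4, a5⟩ := hG x.1 x.2
      omega
    have h2 : ∀ p ∈ C, ∀ q ∈ C, p ≠ q → ¬ Crosses p q := by
      intro p hp q hq hne
      obtain ⟨x, hx, rfl⟩ := Finset.mem_image.mp hp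
      obtain ⟨y, hy, rfl⟩ := Finset.mem_image.mp hq
      exact hB x hx y hy (fun e => hne (by rw [e]))
    have h3 : ((1 : ℕ), n) ∉ C := by
      intro hc
      obtain ⟨x, hx, he⟩ := Finset.mem_image.mp hc
      obtain ⟨a1, a2, a3, a4, a5⟩ := hG x.1 x.2
      exact a5 ⟨by rw [he], by rw [he]⟩
    have := (noncross_aux (n - 1) 1 n C le_rfl h1 h2).2 h3
    omega
  set A := G.attach with hA
  have hsplit : (A.filter (fun x => f x = true)).card
      + (A.filter (fun x => ¬ (f x = true))).card = A.card :=
    Finset.card_filter_add_card_filter_not _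
  have hc1 : (A.filter (fun x => f x = true)).card ≤ n - 3 := by
    refine key _ ?_
    intro x hx y hy hne hcr
    have hadj : (SimpleGraph.fromRel
        (fun x y : {p : ℕ × ℕ // p ∈ G} => Crosses x.1 y.1)).Adj x y := ⟨hne, Or.inl hcr⟩
    have := hf x y hadj
    rw [Finset.mem_filter] at hx hy
    rw [hx.2, hy.2] at this
    exact this rfl
  have hc2 : (A.filter (fun x => ¬ (f x = true))).card ≤ n - 3 := by
    refine key _ ?_
    intro x hx y hy hne hcr
    have hadj : (SimpleGraph.fromRel
        (fun x y : {p : ℕ × ℕ // p ∈ G} => Crosses x.1 y.1)).Adj x y := ⟨hne, Or.inl hcr⟩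
    have := hf x y hadj
    rw [Finset.mem_filter] at hx hy
    have ex : f x = false := by simpa using hx.2
    have ey : f y = false := by simpa using hy.2
    rw [ex, ey] at this
    exact this rfl
  have hcardA : A.card = G.card := Finset.card_attach
  omega
end

section
/- For each n ≥ 4, the set of 2n−6 diagonals of a convex n-gon consisting of { v_1 v_i : 3 ≤ i ≤ n−1 } together with { v_{i−1} v_{i+1} : 3 ≤ i ≤ n−1 } has a crossing graph that is a forest. -/
/-- support indexing by getVert -/
lemma getVert_support_getElem? {V : Type*} {G : SimpleGraph V} {u v : V} (p : G.Walk u v)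
    {n : ℕ} (h : n ≤ p.length) : p.support[n]? = some (p.getVert n) := by
  induction p generalizing n with
  | nil =>
    have : n = 0 := Nat.le_zero.mp h
    subst this; simp
  | cons h' p ih =>
    cases n with
    | zero => simp
    | succ n =>
      simp only [SimpleGraph.Walk.support_cons, SimpleGraph.Walk.getVert_cons_succ,
        List.getElem?_cons_succ]
      exact ih (by simpa using h)

/-- If there is an injective rank function such that every vertex has at most one
neighbor of smaller rank, then the graph is acyclic. -/
lemma acyclic_of_rank {V : Type*} {G : SimpleGraph V} (f : V → ℕ)
    (hinj : Function.Injective f)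
    (hone : ∀ u w1 w2, G.Adj u w1 → G.Adj u w2 → f w1 < f u → f w2 < f u → w1 = w2) :
    G.IsAcyclic := by
  classical
  intro v c hc
  obtain ⟨u, hu, hmax⟩ : ∃ u ∈ c.support, ∀ x ∈ c.support, f x ≤ f u := by
    obtain ⟨u, hu, hmax⟩ := c.support.toFinset.exists_max_image f
      ⟨v, by simp [SimpleGraph.Walk.start_mem_support]⟩
    exact ⟨u, List.mem_toFinset.mp hu, fun x hx => hmax x (List.mem_toFinset.mpr hx)⟩
  set c' := c.rotate u hu with hc'def
  have hcyc : c'.IsCycle := hc.rotate hu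
  set L := c'.length with hLdef
  have hL3 : 3 ≤ L := hcyc.three_le_length
  -- support of c' is contained in support of c
  have hrot := SimpleGraph.Walk.support_rotate c u hu
  have hsub : ∀ x, x ∈ c'.support → x ∈ c.support := by
    intro x hx
    rw [c'.support_eq_cons] at hx
    rcases List.mem_cons.mp hx with h | h
    · subst h; exact hu
    · exact List.mem_of_mem_tail (hrot.mem_iff.mp h)
  have htlen : c'.support.tail.length = L := by
    have h1 : c'.support.length = L + 1 := c'.length_support
    simp [List.length_tail, h1]
  have hnd : c'.support.tail.Nodup := hcyc.2
  -- indexing the tail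
  have hidx : ∀ i : ℕ, i + 1 ≤ L → c'.support.tail[i]? = some (c'.getVert (i + 1)) := by
    intro i hi
    have h1 : c'.support[i+1]? = some (c'.getVert (i + 1)) := getVert_support_getElem? c' hi
    rw [c'.support_eq_cons] at h1
    simpa using h1
  have hne_of_ne : ∀ i j : ℕ, i + 1 ≤ L → j + 1 ≤ L → i ≠ j →
      c'.getVert (i+1) ≠ c'.getVert (j+1) := by
    intro i j hi hj hij heq
    apply hij
    apply (List.getElem?_inj (l := c'.support.tail) (i := i) (j := j) (by omega) hnd).mp
    rw [hidx i hi, hidx j hj, heq]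
  have hgL : c'.getVert L = u := c'.getVert_length
  set a := c'.getVert 1 with hadef
  set b := c'.getVert (L - 1) with hbdef
  have hab : a ≠ b := by
    have := hne_of_ne 0 (L - 2) (by omega) (by omega) (by omega)
    simpa [show L - 2 + 1 = L - 1 by omega] using this
  have hau : a ≠ u := by
    have := hne_of_ne 0 (L - 1) (by omega) (by omega) (by omega)
    rw [show L - 1 + 1 = L by omega, hgL] at this
    simpa using this
  have hbu : b ≠ u := by
    have := hne_of_ne (L - 2) (L - 1) (by omega) (by omega) (by omega)
    rw [show L - 1 + 1 = L by omega, hgL, show L - 2 + 1 = L - 1 by omega] at this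
    exact this
  have haadj : G.Adj u a := by
    have := c'.adj_getVert_succ (i := 0) (by omega)
    simpa using this
  have hbadj : G.Adj u b := by
    have := c'.adj_getVert_succ (i := L - 1) (by omega)
    rw [show L - 1 + 1 = L by omega, hgL] at this
    exact this.symm
  have hamem : a ∈ c.support := hsub a
    (SimpleGraph.Walk.mem_support_iff_exists_getVert.mpr ⟨1, rfl, by omega⟩)
  have hbmem : b ∈ c.support := hsub b
    (SimpleGraph.Walk.mem_support_iff_exists_getVert.mpr ⟨L - 1, rfl, by omega⟩)
  have hfa : f a < f u := lt_of_le_of_ne (hmax a hamem) (fun h => hau (hinj h))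
  have hfb : f b < f u := lt_of_le_of_ne (hmax b hbmem) (fun h => hbu (hinj h))
  exact hab (hone u a b haadj hbadj hfa hfb)

/-- Rank function on diagonals used in the acyclicity proof. -/
def rk (p : ℕ × ℕ) : ℕ := if p.1 = 1 then 2 * p.2 + 1 else p.1 + p.2

lemma rk_fan (i : ℕ) : rk (1, i) = 2 * i + 1 := by simp [rk]

lemma rk_ear (i : ℕ) (h : 3 ≤ i) : rk (i - 1, i + 1) = 2 * i := by
  simp only [rk]
  rw [if_neg (by omega : ¬ (i - 1 = 1))]
  omega

theorem stmt10 (n : ℕ) (hn : 4 ≤ n) (G : Finset (ℕ × ℕ))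
    (hGdef : G = (Finset.Icc 3 (n - 1)).image (fun i => ((1 : ℕ), i)) ∪
        (Finset.Icc 3 (n - 1)).image (fun i => (i - 1, i + 1))) :
    (∀ p ∈ G, IsDiag n p) ∧ G.card = 2 * n - 6 ∧
      (SimpleGraph.fromRel
        (fun x y : {p : ℕ × ℕ // p ∈ G} => Crosses x.1 y.1)).IsAcyclic := by
  have hmem : ∀ p : ℕ × ℕ, p ∈ G →
      (∃ i, 3 ≤ i ∧ i ≤ n - 1 ∧ p = (1, i)) ∨
      (∃ i, 3 ≤ i ∧ i ≤ n - 1 ∧ p = (i - 1, i + 1)) := by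
    intro p hp
    rw [hGdef, Finset.mem_union] at hp
    rcases hp with hp | hp
    · left
      obtain ⟨i, hi, rfl⟩ := Finset.mem_image.mp hp
      rw [Finset.mem_Icc] at hi
      exact ⟨i, hi.1, hi.2, rfl⟩
    · right
      obtain ⟨i, hi, rfl⟩ := Finset.mem_image.mp hp
      rw [Finset.mem_Icc] at hi
      exact ⟨i, hi.1, hi.2, rfl⟩
  refine ⟨?_, ?_, ?_⟩
  · -- every element is a diagonal
    intro p hp
    rcases hmem p hp with ⟨i, h1, h2, rfl⟩ | ⟨i, h1, h2, rfl⟩ <;>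
      (unfold IsDiag; dsimp only; omega)
  · -- cardinality
    have hinj1 : Function.Injective (fun i : ℕ => ((1 : ℕ), i)) := by
      intro a b h
      simpa using h
    have hinj2 : Function.Injective (fun i : ℕ => (i - 1, i + 1)) := by
      intro a b h
      have : a + 1 = b + 1 := congrArg Prod.snd h
      omega
    have hdisj : Disjoint ((Finset.Icc 3 (n - 1)).image (fun i => ((1 : ℕ), i)))
        ((Finset.Icc 3 (n - 1)).image (fun i => (i - 1, i + 1))) := by
      rw [Finset.disjoint_left]
      rintro p hp hq
      obtain ⟨i, hi, rfl⟩ := Finset.mem_image.mp hp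
      obtain ⟨j, hj, hji⟩ := Finset.mem_image.mp hq
      rw [Finset.mem_Icc] at hi hj
      have : j - 1 = 1 := congrArg Prod.fst hji
      omega
    rw [hGdef, Finset.card_union_of_disjoint hdisj,
      Finset.card_image_of_injective _ hinj1, Finset.card_image_of_injective _ hinj2,
      Nat.card_Icc]
    omega
  · -- acyclicity
    apply acyclic_of_rank (f := fun x : {p : ℕ × ℕ // p ∈ G} => rk x.1)
    · -- injectivity of the rank
      intro x y hxy
      apply Subtype.ext
      dsimp only at hxy
      rcases hmem x.1 x.2 with ⟨i, hi1, hi2, hx⟩ | ⟨i, hi1, hi2, hx⟩ <;>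
        rcases hmem y.1 y.2 with ⟨j, hj1, hj2, hy⟩ | ⟨j, hj1, hj2, hy⟩ <;>
        rw [hx, hy] at hxy ⊢
      · rw [rk_fan, rk_fan] at hxy
        simp only [Prod.mk.injEq, true_and]
        omega
      · rw [rk_fan, rk_ear j hj1] at hxy
        exfalso; omega
      · rw [rk_ear i hi1, rk_fan] at hxy
        exfalso; omega
      · rw [rk_ear i hi1, rk_ear j hj1] at hxy
        simp only [Prod.mk.injEq]
        omega
    · -- at most one smaller-rank neighbor
      intro u w1 w2 h1 h2 hf1 hf2
      rw [SimpleGraph.fromRel_adj] at h1 h2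
      rcases hmem u.1 u.2 with ⟨i, hi1, hi2, hu⟩ | ⟨i, hi1, hi2, hu⟩
      · -- u is a fan diagonal (1, i); only smaller neighbor is the ear (i-1, i+1)
        have key : ∀ w : {p : ℕ × ℕ // p ∈ G},
            (Crosses u.1 w.1 ∨ Crosses w.1 u.1) → rk w.1 < rk u.1 →
            w.1 = (i - 1, i + 1) := by
          intro w hcr hfw
          rcases hmem w.1 w.2 with ⟨j, hj1, hj2, hw⟩ | ⟨j, hj1, hj2, hw⟩
          · exfalso
            rw [hu, hw] at hcr
            simp only [Crosses] at hcr
            omega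
          · rw [hu, hw] at hcr hfw
            rw [hw]
            rw [rk_fan, rk_ear j hj1] at hfw
            simp only [Crosses] at hcr
            simp only [Prod.mk.injEq]
            omega
        exact Subtype.ext ((key w1 h1.2 hf1).trans (key w2 h2.2 hf2).symm)
      · -- u is an ear (i-1, i+1); only smaller neighbor is the ear (i-2, i)
        have key : ∀ w : {p : ℕ × ℕ // p ∈ G},
            (Crosses u.1 w.1 ∨ Crosses w.1 u.1) → rk w.1 < rk u.1 →
            w.1 = (i - 2, i) := by
          intro w hcr hfw
          rcases hmem w.1 w.2 with ⟨j, hj1, hj2, hw⟩ | ⟨j, hj1, hj2, hw⟩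
          · exfalso
            rw [hu, hw] at hcr hfw
            rw [rk_ear i hi1, rk_fan] at hfw
            simp only [Crosses] at hcr
            omega
          · rw [hu, hw] at hcr hfw
            rw [hw]
            rw [rk_ear i hi1, rk_ear j hj1] at hfw
            simp only [Crosses] at hcr
            simp only [Prod.mk.injEq]
            omega
        exact Subtype.ext ((key w1 h1.2 hf1).trans (key w2 h2.2 hf2).symm)
end

section
/- Parallel composition edge count: suppose H is a set of diagonals of a convex n'-gon and R a set of diagonals of a convex r-gon, both with local crossing number at most ℓ, and n = q(n'−2) + r with q ≥ 0 and r ≥ 3. Then there exists a set of diagonals of a convex n-gon with local crossing number at most ℓ and with exactly q(|H|+1) + |R| diagonals; consequently e_ℓ(n) ≥ (n−r)·(|H|+1)/(n'−2) + |R|. -/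
def auxPhi (m N : ℕ) (p : ℕ × ℕ) : ℕ × ℕ := (p.1, if p.2 = m then N else p.2)

def auxPsi (m N : ℕ) (p : ℕ × ℕ) : ℕ × ℕ :=
  if p.1 = 1 then (m - 1, N + 2 - p.2) else (N + 2 - p.2, N + 2 - p.1)

section helpers

lemma phi_P1 (hm : 3 ≤ m) (hn' : 3 ≤ n') (hN : N = m + (n' - 2))
    {p : ℕ × ℕ} (hp : IsDiag m p) :
    1 ≤ (auxPhi m N p).1 ∧ (auxPhi m N p).1 < (auxPhi m N p).2 ∧
    (auxPhi m N p).1 ≤ m - 2 ∧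
    ((auxPhi m N p).2 ≤ m - 1 ∨ (auxPhi m N p).2 = N) ∧
    ((auxPhi m N p).2 = N → 2 ≤ (auxPhi m N p).1) := by
  obtain ⟨h1, h2, h3, h4, h5⟩ := hp
  unfold auxPhi
  split_ifs with h <;> dsimp only <;> omega

lemma psi_P2 (hm : 3 ≤ m) (hn' : 3 ≤ n') (hN : N = m + (n' - 2))
    {p : ℕ × ℕ} (hp : IsDiag n' p) :
    (m - 1 ≤ (auxPsi m N p).1 ∧ (auxPsi m N p).1 < (auxPsi m N p).2 ∧
      (auxPsi m N p).2 ≤ N) ∧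
    ((auxPsi m N p).1 = m - 1 → (auxPsi m N p).2 ≤ N - 1) ∧
    ((auxPsi m N p).2 = N → m ≤ (auxPsi m N p).1) := by
  obtain ⟨h1, h2, h3, h4, h5⟩ := hp
  unfold auxPsi
  split_ifs with h <;> dsimp only <;> omega

lemma phi_diag (hm : 3 ≤ m) (hn' : 3 ≤ n') (hN : N = m + (n' - 2))
    {p : ℕ × ℕ} (hp : IsDiag m p) : IsDiag N (auxPhi m N p) := by
  obtain ⟨h1, h2, h3, h4, h5⟩ := hp
  unfold auxPhi IsDiag
  split_ifs with h <;> dsimp only <;> omega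

lemma psi_diag (hm : 3 ≤ m) (hn' : 3 ≤ n') (hN : N = m + (n' - 2))
    {p : ℕ × ℕ} (hp : IsDiag n' p) : IsDiag N (auxPsi m N p) := by
  obtain ⟨h1, h2, h3, h4, h5⟩ := hp
  unfold auxPsi IsDiag
  split_ifs with h <;> dsimp only <;> omega

lemma phi_cross (hm : 3 ≤ m) (hn' : 3 ≤ n') (hN : N = m + (n' - 2))
    {p q : ℕ × ℕ} (hp : IsDiag m p) (hq : IsDiag m q) :
    Crosses (auxPhi m N p) (auxPhi m N q) ↔ Crosses p q := by
  obtain ⟨h1, h2, h3, h4, h5⟩ := hp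
  obtain ⟨g1, g2, g3, g4, g5⟩ := hq
  unfold auxPhi Crosses
  split_ifs with h h' h' <;> dsimp only <;> omega

lemma psi_cross (hm : 3 ≤ m) (hn' : 3 ≤ n') (hN : N = m + (n' - 2))
    {p q : ℕ × ℕ} (hp : IsDiag n' p) (hq : IsDiag n' q) :
    Crosses (auxPsi m N p) (auxPsi m N q) ↔ Crosses p q := by
  obtain ⟨h1, h2, h3, h4, h5⟩ := hp
  obtain ⟨g1, g2, g3, g4, g5⟩ := hq
  unfold auxPsi Crosses
  split_ifs with h h' h' <;> dsimp only <;> omega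

lemma phi_inj (hm : 3 ≤ m) (hn' : 3 ≤ n') (hN : N = m + (n' - 2))
    {p q : ℕ × ℕ} (hp : IsDiag m p) (hq : IsDiag m q)
    (h : auxPhi m N p = auxPhi m N q) : p = q := by
  obtain ⟨h1, h2, h3, h4, h5⟩ := hp
  obtain ⟨g1, g2, g3, g4, g5⟩ := hq
  unfold auxPhi at h
  rw [Prod.ext_iff] at h ⊢
  dsimp only at h
  split_ifs at h <;> omega

lemma psi_inj (hm : 3 ≤ m) (hn' : 3 ≤ n') (hN : N = m + (n' - 2))
    {p q : ℕ × ℕ} (hp : IsDiag n' p) (hq : IsDiag n' q)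
    (h : auxPsi m N p = auxPsi m N q) : p = q := by
  obtain ⟨h1, h2, h3, h4, h5⟩ := hp
  obtain ⟨g1, g2, g3, g4, g5⟩ := hq
  unfold auxPsi at h
  split_ifs at h <;> rw [Prod.ext_iff] at h ⊢ <;>
    dsimp only at h <;> omega

lemma S1_S2_nocross {a b : ℕ × ℕ} (h1 : 1 ≤ a.1) (h2 : a.1 < a.2)
    (h3 : a.1 ≤ m - 1) (h4 : a.2 ≤ m - 1 ∨ a.2 = N) (h5 : m - 1 ≤ b.1)
    (h6 : b.1 < b.2) (h7 : b.2 ≤ N) : ¬ Crosses a b ∧ ¬ Crosses b a := by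
  unfold Crosses; omega

end helpers

lemma compose (ℓ m n' : ℕ) (hm : 3 ≤ m) (hn' : 3 ≤ n')
    (G H : Finset (ℕ × ℕ)) (hG : ∀ p ∈ G, IsDiag m p) (hH : ∀ p ∈ H, IsDiag n' p)
    (hGl : LcnLE G ℓ) (hHl : LcnLE H ℓ) :
    ∃ G' : Finset (ℕ × ℕ), (∀ p ∈ G', IsDiag (m + (n' - 2)) p) ∧ LcnLE G' ℓ ∧
      G'.card = G.card + (H.card + 1) := by
  have hN' : m + (n' - 2) = m + (n' - 2) := rfl
  let φ := auxPhi m (m + (n' - 2))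
  let ψ := auxPsi m (m + (n' - 2))
  let e : ℕ × ℕ := (m - 1, m + (n' - 2))
  have hφdef : ∀ p, φ p = auxPhi m (m + (n' - 2)) p := fun _ => rfl
  have hψdef : ∀ p, ψ p = auxPsi m (m + (n' - 2)) p := fun _ => rfl
  have he1 : e.1 = m - 1 := rfl
  have he2 : e.2 = m + (n' - 2) := rfl
  have hGH : ∀ p ∈ G, ∀ q ∈ H, ¬ Crosses (φ p) (ψ q) ∧ ¬ Crosses (ψ q) (φ p) := by
    intro p hp q hq
    rw [hφdef, hψdef]
    obtain ⟨a1, a2, a3, a4, a5⟩ := phi_P1 hm hn' hN' (hG p hp)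
    obtain ⟨⟨b1, b2, b3⟩, -, -⟩ := psi_P2 hm hn' hN' (hH q hq)
    exact S1_S2_nocross a1 a2 (by omega) (by omega) b1 b2 b3
  have hGe : ∀ p ∈ G, ¬ Crosses (φ p) e ∧ ¬ Crosses e (φ p) := by
    intro p hp
    rw [hφdef]
    obtain ⟨a1, a2, a3, a4, a5⟩ := phi_P1 hm hn' hN' (hG p hp)
    exact S1_S2_nocross (m := m) (N := m + (n' - 2)) a1 a2 (by omega) (by omega)
      (by rw [he1]; try omega) (by rw [he1, he2]; try omega) (by rw [he2]; try omega)
  have hHe : ∀ q ∈ H, ¬ Crosses e (ψ q) ∧ ¬ Crosses (ψ q) e := by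
    intro q hq
    rw [hψdef]
    obtain ⟨⟨b1, b2, b3⟩, -, -⟩ := psi_P2 hm hn' hN' (hH q hq)
    exact S1_S2_nocross (m := m) (N := m + (n' - 2)) (by rw [he1]; try omega)
      (by rw [he1, he2]; try omega) (by rw [he1]; try omega) (by rw [he2]; try omega) b1 b2 b3
  have hee : ¬ Crosses e e := by
    unfold Crosses
    rw [he1, he2]
    omega
  have hφinj : Set.InjOn φ G := fun p hp q hq h =>
    phi_inj hm hn' hN' (hG p hp) (hG q hq) h
  have hψinj : Set.InjOn ψ H := fun p hp q hq h =>
    psi_inj hm hn' hN' (hH p hp) (hH q hq) h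
  have hdGH : Disjoint (G.image φ) (H.image ψ) := by
    rw [Finset.disjoint_left]
    rintro x hx hx'
    rw [Finset.mem_image] at hx hx'
    obtain ⟨p, hp, rfl⟩ := hx
    obtain ⟨q, hq, hqx⟩ := hx'
    rw [hψdef, hφdef] at hqx
    obtain ⟨a1, a2, a3, a4, a5⟩ := phi_P1 hm hn' hN' (hG p hp)
    obtain ⟨⟨b1, b2, b3⟩, c1, c2⟩ := psi_P2 hm hn' hN' (hH q hq)
    rw [Prod.ext_iff] at hqx
    omega
  have heG : e ∉ G.image φ := by
    rw [Finset.mem_image]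
    rintro ⟨p, hp, hx⟩
    rw [hφdef] at hx
    obtain ⟨a1, a2, a3, a4, a5⟩ := phi_P1 hm hn' hN' (hG p hp)
    rw [Prod.ext_iff] at hx
    rw [he1, he2] at hx
    omega
  have heH : e ∉ H.image ψ := by
    rw [Finset.mem_image]
    rintro ⟨q, hq, hx⟩
    rw [hψdef] at hx
    obtain ⟨⟨b1, b2, b3⟩, c1, c2⟩ := psi_P2 hm hn' hN' (hH q hq)
    rw [Prod.ext_iff] at hx
    rw [he1, he2] at hx
    omega
  refine ⟨(G.image φ ∪ H.image ψ) ∪ {e}, ?_, ?_, ?_⟩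
  · intro p hp
    simp only [Finset.mem_union, Finset.mem_image, Finset.mem_singleton] at hp
    rcases hp with (⟨q, hq, rfl⟩ | ⟨q, hq, rfl⟩) | rfl
    · exact phi_diag hm hn' hN' (hG q hq)
    · exact psi_diag hm hn' hN' (hH q hq)
    · unfold IsDiag
      rw [he1, he2]
      omega
  · intro d hd
    simp only [Finset.mem_union, Finset.mem_image, Finset.mem_singleton] at hd
    rw [Finset.filter_union, Finset.filter_union]
    rcases hd with (⟨p, hp, rfl⟩ | ⟨p, hp, rfl⟩) | rfl
    · have h2 : (H.image ψ).filter (fun d' => Crosses (φ p) d') = ∅ := by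
        rw [Finset.filter_eq_empty_iff]
        rintro x hx
        rw [Finset.mem_image] at hx
        obtain ⟨q, hq, rfl⟩ := hx
        exact (hGH p hp q hq).1
      have h3 : ({e} : Finset (ℕ × ℕ)).filter (fun d' => Crosses (φ p) d') = ∅ := by
        rw [Finset.filter_singleton, if_neg (hGe p hp).1]
      have h1 : (G.image φ).filter (fun d' => Crosses (φ p) d')
          = (G.filter (fun d' => Crosses p d')).image φ := by
        ext x
        simp only [Finset.mem_filter, Finset.mem_image]
        constructor
        · rintro ⟨⟨q, hq, rfl⟩, hc⟩
          exact ⟨q, ⟨hq, (phi_cross hm hn' hN' (hG p hp) (hG q hq)).1 hc⟩, rfl⟩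
        · rintro ⟨q, ⟨hq, hc⟩, rfl⟩
          exact ⟨⟨q, hq, rfl⟩, (phi_cross hm hn' hN' (hG p hp) (hG q hq)).2 hc⟩
      rw [h1, h2, h3, Finset.union_empty, Finset.union_empty,
        Finset.card_image_of_injOn (hφinj.mono (fun x hx => (Finset.mem_filter.mp hx).1))]
      exact hGl p hp
    · have h2 : (G.image φ).filter (fun d' => Crosses (ψ p) d') = ∅ := by
        rw [Finset.filter_eq_empty_iff]
        rintro x hx
        rw [Finset.mem_image] at hx
        obtain ⟨q, hq, rfl⟩ := hx
        exact (hGH q hq p hp).2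
      have h3 : ({e} : Finset (ℕ × ℕ)).filter (fun d' => Crosses (ψ p) d') = ∅ := by
        rw [Finset.filter_singleton, if_neg (hHe p hp).2]
      have h1 : (H.image ψ).filter (fun d' => Crosses (ψ p) d')
          = (H.filter (fun d' => Crosses p d')).image ψ := by
        ext x
        simp only [Finset.mem_filter, Finset.mem_image]
        constructor
        · rintro ⟨⟨q, hq, rfl⟩, hc⟩
          exact ⟨q, ⟨hq, (psi_cross hm hn' hN' (hH p hp) (hH q hq)).1 hc⟩, rfl⟩
        · rintro ⟨q, ⟨hq, hc⟩, rfl⟩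
          exact ⟨⟨q, hq, rfl⟩, (psi_cross hm hn' hN' (hH p hp) (hH q hq)).2 hc⟩
      rw [h1, h2, h3, Finset.empty_union, Finset.union_empty,
        Finset.card_image_of_injOn (hψinj.mono (fun x hx => (Finset.mem_filter.mp hx).1))]
      exact hHl p hp
    · have h1 : (G.image φ).filter (fun d' => Crosses e d') = ∅ := by
        rw [Finset.filter_eq_empty_iff]
        rintro x hx
        rw [Finset.mem_image] at hx
        obtain ⟨q, hq, rfl⟩ := hx
        exact (hGe q hq).2
      have h2 : (H.image ψ).filter (fun d' => Crosses e d') = ∅ := by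
        rw [Finset.filter_eq_empty_iff]
        rintro x hx
        rw [Finset.mem_image] at hx
        obtain ⟨q, hq, rfl⟩ := hx
        exact (hHe q hq).1
      have h3 : ({e} : Finset (ℕ × ℕ)).filter (fun d' => Crosses e d') = ∅ := by
        rw [Finset.filter_singleton, if_neg hee]
      rw [h1, h2, h3]
      simp
  · rw [Finset.card_union_of_disjoint (by
        rw [Finset.disjoint_singleton_right, Finset.mem_union]
        rintro (h | h)
        exacts [heG h, heH h]),
      Finset.card_union_of_disjoint hdGH,
      Finset.card_image_of_injOn hφinj, Finset.card_image_of_injOn hψinj,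
      Finset.card_singleton]
    omega

theorem stmt14 (ℓ n' r q n : ℕ) (hn' : 3 ≤ n') (hr : 3 ≤ r)
    (hn : n = q * (n' - 2) + r)
    (H R : Finset (ℕ × ℕ)) (hH : ∀ p ∈ H, IsDiag n' p) (hR : ∀ p ∈ R, IsDiag r p)
    (hHl : LcnLE H ℓ) (hRl : LcnLE R ℓ) :
    ∃ G : Finset (ℕ × ℕ), (∀ p ∈ G, IsDiag n p) ∧ LcnLE G ℓ ∧
      G.card = q * (H.card + 1) + R.card ∧
      ((n : ℚ) - r) * ((H.card : ℚ) + 1) / ((n' : ℚ) - 2) + R.card ≤ (G.card : ℚ) := by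
  have key : ∀ k : ℕ, ∃ G : Finset (ℕ × ℕ), (∀ p ∈ G, IsDiag (k * (n' - 2) + r) p) ∧
      LcnLE G ℓ ∧ G.card = k * (H.card + 1) + R.card := by
    intro k
    induction k with
    | zero => exact ⟨R, by simpa using hR, hRl, by simp⟩
    | succ k ih =>
      obtain ⟨G, hGd, hGl, hGc⟩ := ih
      obtain ⟨G', hG'd, hG'l, hG'c⟩ := compose ℓ (k * (n' - 2) + r) n'
        (by omega) hn' G H hGd hH hGl hHl
      refine ⟨G', ?_, hG'l, ?_⟩
      · have : k * (n' - 2) + r + (n' - 2) = (k + 1) * (n' - 2) + r := by ring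
        rwa [this] at hG'd
      · rw [hG'c, hGc]; ring
  obtain ⟨G, hGd, hGl, hGc⟩ := key q
  rw [← hn] at hGd
  refine ⟨G, hGd, hGl, hGc, ?_⟩
  rw [hGc]
  have h2 : (2 : ℚ) ≤ (n' : ℚ) := by exact_mod_cast (by omega : 2 ≤ n')
  have hne : (n' : ℚ) - 2 ≠ 0 := by
    have h3 : (3 : ℚ) ≤ (n' : ℚ) := by exact_mod_cast hn'
    linarith
  have hnr : ((n : ℚ) - r) = q * ((n' : ℚ) - 2) := by
    subst hn
    push_cast [Nat.cast_sub (by omega : 2 ≤ n')]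
    ring
  rw [hnr]
  rw [mul_comm (q : ℚ) ((n' : ℚ) - 2), mul_assoc, mul_comm ((n' : ℚ) - 2),
    mul_div_assoc, div_self hne, mul_one]
  push_cast
  ring_nf
  exact le_refl _
end
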